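/- For q in (0,1) and n >= 2, let w be Mallows distributed on S_n. Then Cov(des(w), des(w^{-1})) = (q/(1+q) - q^2/(1+q)^2) * sum_{i,j in [n-1]} P({w(i), w(i+1)} = {j, j+1}); in particular, since each summand is non-negative, Cov(des(w), des(w^{-1})) >= 0. -/

import Mathlib

/-- Number of inversions of a permutation of `Fin n`. -/
def invCount (n : ℕ) (w : Equiv.Perm (Fin n)) : ℕ :=
  (Finset.univ.filter (fun p : Fin n × Fin n => p.1 < p.2 ∧ w p.2 < w p.1)).card

/-- The q-factorial `[m]_q! = ∏_{i=1}^m (1 + q + ⋯ + q^{i-1})`. -/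
noncomputable def qFactorial (q : ℝ) (m : ℕ) : ℝ :=
  ∏ i ∈ Finset.Icc 1 m, (∑ j ∈ Finset.range i, q ^ j)

/-- The Mallows probability of `w`: `q^{l(w)} / [n]_q!`. -/
noncomputable def mallows (q : ℝ) (n : ℕ) (w : Equiv.Perm (Fin n)) : ℝ :=
  q ^ invCount n w / qFactorial q n

/-- Number of descents of a permutation of `Fin n`: positions `i` (0-based) with a
successor `j = i+1` such that `w j < w i`. -/
def desCount (n : ℕ) (w : Equiv.Perm (Fin n)) : ℕ :=
  (Finset.univ.filter
    (fun p : Fin n × Fin n => (p.2 : ℕ) = (p.1 : ℕ) + 1 ∧ w p.2 < w p.1)).card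


/-!
Fix adjacent positions `i, i + 1` and adjacent values `j, j + 1`, and let `X = [w(i+1) < w(i)]`,
`Y = [w⁻¹(j+1) < w⁻¹(j)]` and `A = [{w(i), w(i+1)} = {j, j+1}]`. The involution
`w ↦ w · (i i+1)` toggles `X`, changes the length by one, and preserves `A`, and also `Y` off `A`;
symmetrically `w ↦ (j j+1) · w` toggles `Y` and preserves `A`. An involution that toggles an
indicator while multiplying the weight `q^{l(w)}` by `q` on one side splits every invariant event
in the ratio `q : 1`. Hence, with `r = q/(1+q)`, `P(X) = P(Y) = r`; on `A` the indicators `X` and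
`Y` coincide, so `P(X ∧ Y ∧ A) = r P(A)`, while `P(X ∧ Y ∧ ¬A) = r² (1 - P(A))`. Thus
`Cov(X, Y) = (r - r²) P(A)`, and summing over all `(i, j)` gives the covariance of `des w` and
`des w⁻¹`. That the weights sum to `[n]_q!` follows by inserting the first letter.
-/

open Finset Equiv

section Inversions

variable {n : ℕ}

theorem swap_lt_swap_iff_of_val_eq_succ {i₁ i₂ a b : Fin n} (hi : (i₂ : ℕ) = i₁ + 1)
    (hab : ¬(a = i₁ ∧ b = i₂ ∨ a = i₂ ∧ b = i₁)) :
    swap i₁ i₂ a < swap i₁ i₂ b ↔ a < b := by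
  simp only [swap_apply_def, Fin.lt_def, Fin.ext_iff] at hab ⊢
  split_ifs <;> omega

theorem invCount_mul_swap {i₁ i₂ : Fin n} (hi : (i₂ : ℕ) = i₁ + 1) {w : Perm (Fin n)}
    (hw : w i₁ < w i₂) : invCount n (w * swap i₁ i₂) = invCount n w + 1 := by
  have hlt : i₁ < i₂ := Fin.lt_def.2 (by omega)
  set σ := (swap i₁ i₂).prodCongr (swap i₁ i₂)
  have key : univ.filter (fun p : Fin n × Fin n =>
        p.1 < p.2 ∧ (w * swap i₁ i₂) p.2 < (w * swap i₁ i₂) p.1)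
      = insert (i₁, i₂)
          ((univ.filter fun p : Fin n × Fin n => p.1 < p.2 ∧ w p.2 < w p.1).map σ.toEmbedding) := by
    ext ⟨a, b⟩
    rw [mem_insert, mem_map_equiv, mem_filter, mem_filter]
    simp only [mem_univ, true_and, Prod.mk.injEq, Perm.mul_apply, σ, prodCongr_symm, symm_swap,
      prodCongr_apply, Prod.map]
    by_cases hab : a = i₁ ∧ b = i₂ ∨ a = i₂ ∧ b = i₁
    · rcases hab with ⟨rfl, rfl⟩ | ⟨rfl, rfl⟩ <;>
        simp [hw, hlt, hlt.ne', not_lt_of_gt]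
    · rw [swap_lt_swap_iff_of_val_eq_succ hi hab]
      tauto
  rw [invCount, invCount, key, card_insert_of_notMem, card_map]
  simp [σ, hlt.le, not_lt_of_ge]

theorem invCount_inv (w : Perm (Fin n)) : invCount n w⁻¹ = invCount n w := by
  refine card_equiv ((w⁻¹.prodCongr w⁻¹).trans (prodComm _ _)) fun p => ?_
  simp [and_comm]

end Inversions

section QFactorial

variable {n : ℕ}

def permCons (p : Fin (n + 1)) (σ : Perm (Fin n)) : Perm (Fin (n + 1)) :=
  (finSuccEquiv' 0).trans (σ.optionCongr.trans (finSuccEquiv' p).symm)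

@[simp]
theorem permCons_zero (p : Fin (n + 1)) (σ : Perm (Fin n)) : permCons p σ 0 = p := by
  simp [permCons, finSuccEquiv'_at, finSuccEquiv'_symm_none]

@[simp]
theorem permCons_succ (p : Fin (n + 1)) (σ : Perm (Fin n)) (i : Fin n) :
    permCons p σ i.succ = p.succAbove (σ i) := by
  simp [permCons, finSuccEquiv'_zero, finSuccEquiv'_symm_some]

theorem permCons_bijective :
    Function.Bijective fun x : Fin (n + 1) × Perm (Fin n) => permCons x.1 x.2 := by
  refine (Fintype.bijective_iff_injective_and_card _).2 ⟨?_, ?_⟩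
  · rintro ⟨p, σ⟩ ⟨p', σ'⟩ h
    have hp : p = p' := by simpa using congr($h 0)
    subst hp
    refine Prod.ext rfl (Equiv.ext fun i => Fin.succAbove_right_injective (p := p) ?_)
    simpa using congr($h i.succ)
  · simp [Fintype.card_perm, Nat.factorial_succ]

theorem invCount_eq_sum (w : Perm (Fin n)) :
    invCount n w = ∑ a, ∑ b, if a < b ∧ w b < w a then 1 else 0 := by
  rw [invCount, card_filter, ← Fintype.sum_prod_type']

theorem invCount_permCons (p : Fin (n + 1)) (σ : Perm (Fin n)) :
    invCount (n + 1) (permCons p σ) = p + invCount n σ := by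
  have hzero : ∑ i, (if p.succAbove (σ i) < p then 1 else 0) = (p : ℕ) := by
    rw [Equiv.sum_comp σ fun i => if p.succAbove i < p then 1 else 0, ← card_filter]
    simp only [Fin.succAbove_lt_iff_castSucc_lt]
    simp only [Fin.lt_def, Fin.val_castSucc, Fin.card_filter_val_lt]
    omega
  rw [invCount_eq_sum, invCount_eq_sum, Fin.sum_univ_succ]
  simp only [Fin.sum_univ_succ, permCons_zero, permCons_succ, Fin.succ_lt_succ_iff,
    Fin.succAbove_lt_succAbove_iff, lt_irrefl, Fin.succ_pos, Fin.not_lt_zero, true_and,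
    false_and, if_false, zero_add, hzero]

theorem sum_pow_invCount (q : ℝ) (n : ℕ) :
    ∑ w : Perm (Fin n), q ^ invCount n w = qFactorial q n := by
  induction n with
  | zero => simp [qFactorial, invCount]
  | succ m ih =>
    rw [← Fintype.sum_bijective _ permCons_bijective _ _ fun _ => rfl, Fintype.sum_prod_type]
    simp only [invCount_permCons, pow_add, ← sum_mul_sum, ih, qFactorial,
      prod_Icc_succ_top (Nat.le_add_left 1 m), Fin.sum_univ_eq_sum_range (q ^ ·) (m + 1)]
    ring

theorem qFactorial_pos {q : ℝ} (hq : 0 < q) (n : ℕ) : 0 < qFactorial q n :=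
  prod_pos fun i hi => sum_pos (fun j _ => pow_pos hq j)
    ⟨0, mem_range.2 (by simp at hi; omega)⟩

end QFactorial

theorem sum_filter_and_eq_of_involutive {α : Type*} [Fintype α] {q : ℝ} (hq : 1 + q ≠ 0)
    (μ : α → ℝ) {F : α → α} (hF : Function.Involutive F) {P Q : α → Prop} [DecidablePred P]
    [DecidablePred Q] (hFP : ∀ a, P (F a) ↔ ¬P a) (hFQ : ∀ a, Q (F a) ↔ Q a)
    (hμ : ∀ a, ¬P a → μ (F a) = q * μ a) :
    ∑ a ∈ univ.filter (fun a => P a ∧ Q a), μ a = q / (1 + q) * ∑ a ∈ univ.filter Q, μ a := by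
  have hsplit := sum_filter_add_sum_filter_not (univ.filter Q) P μ
  rw [filter_filter, filter_filter] at hsplit
  have hflip : ∑ a ∈ univ.filter (fun a => Q a ∧ P a), μ a
      = q * ∑ a ∈ univ.filter (fun a => Q a ∧ ¬P a), μ a := by
    rw [mul_sum]
    refine sum_nbij' F F ?_ ?_ (fun a _ => hF a) (fun a _ => hF a) ?_ <;>
      simp only [mem_filter, mem_univ, true_and]
    · exact fun a ha => ⟨(hFQ a).2 ha.1, fun h => (hFP a).1 h ha.2⟩
    · exact fun a ha => ⟨(hFQ a).2 ha.1, (hFP a).2 ha.2⟩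
    · intro a ha
      have := hμ (F a) ((hFP a).not_left.2 ha.2)
      rwa [hF a] at this
  simp only [and_comm (a := P _)]
  rw [← hsplit, hflip]
  field_simp
  ring

section Mallows

variable {n : ℕ} {q : ℝ}

noncomputable def mallowsProb (q : ℝ) (n : ℕ) (P : Perm (Fin n) → Prop) [DecidablePred P] : ℝ :=
  ∑ w ∈ univ.filter P, mallows q n w

theorem mallows_nonneg (hq : 0 < q) (w : Perm (Fin n)) : 0 ≤ mallows q n w :=
  div_nonneg (pow_nonneg hq.le _) (qFactorial_pos hq n).le

theorem sum_mallows (hq : 0 < q) : ∑ w : Perm (Fin n), mallows q n w = 1 := by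
  simp only [mallows, ← sum_div, sum_pow_invCount]
  exact div_self (qFactorial_pos hq n).ne'

theorem mallows_inv (w : Perm (Fin n)) : mallows q n w⁻¹ = mallows q n w := by
  rw [mallows, mallows, invCount_inv]

theorem mallows_mul_swap {i₁ i₂ : Fin n} (hi : (i₂ : ℕ) = i₁ + 1) {w : Perm (Fin n)}
    (hw : w i₁ < w i₂) : mallows q n (w * swap i₁ i₂) = q * mallows q n w := by
  rw [mallows, mallows, invCount_mul_swap hi hw, pow_succ, mul_comm _ q, mul_div_assoc]

theorem mallows_swap_mul {j₁ j₂ : Fin n} (hj : (j₂ : ℕ) = j₁ + 1) {w : Perm (Fin n)}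
    (hw : w⁻¹ j₁ < w⁻¹ j₂) : mallows q n (swap j₁ j₂ * w) = q * mallows q n w := by
  rw [← mallows_inv, mul_inv_rev, swap_inv, mallows_mul_swap hj hw, mallows_inv]

theorem mallowsProb_nonneg (hq : 0 < q) (P : Perm (Fin n) → Prop) [DecidablePred P] :
    0 ≤ mallowsProb q n P :=
  sum_nonneg fun w _ => mallows_nonneg hq w

theorem mallowsProb_congr {P Q : Perm (Fin n) → Prop} [DecidablePred P] [DecidablePred Q]
    (h : ∀ w, P w ↔ Q w) : mallowsProb q n P = mallowsProb q n Q := by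
  rw [mallowsProb, mallowsProb, filter_congr fun w _ => h w]

theorem mallowsProb_true (hq : 0 < q) : mallowsProb q n (fun _ => True) = 1 := by
  simp [mallowsProb, sum_mallows hq]

theorem mallowsProb_and_add_and_not (P Q : Perm (Fin n) → Prop) [DecidablePred P]
    [DecidablePred Q] :
    mallowsProb q n (fun w => P w ∧ Q w) + mallowsProb q n (fun w => P w ∧ ¬Q w)
      = mallowsProb q n P := by
  rw [mallowsProb, mallowsProb, mallowsProb, ← filter_filter, ← filter_filter,
    sum_filter_add_sum_filter_not]

theorem mallowsProb_not (hq : 0 < q) (P : Perm (Fin n) → Prop) [DecidablePred P] :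
    mallowsProb q n (fun w => ¬P w) = 1 - mallowsProb q n P := by
  rw [← mallowsProb_true hq, ← mallowsProb_and_add_and_not (fun _ => True) P]
  simp only [true_and]
  ring

end Mallows

section AdjacentPair

variable {n : ℕ} {q : ℝ} {i₁ i₂ j₁ j₂ : Fin n}

theorem mallowsProb_descent_and (hq : 0 < q) (hi : (i₂ : ℕ) = i₁ + 1)
    (Q : Perm (Fin n) → Prop) [DecidablePred Q] (hQ : ∀ w, Q (w * swap i₁ i₂) ↔ Q w) :
    mallowsProb q n (fun w => w i₂ < w i₁ ∧ Q w) = q / (1 + q) * mallowsProb q n Q := by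
  have hne : i₁ ≠ i₂ := fun h => by simp [h] at hi
  have hasc (w : Perm (Fin n)) (hw : ¬w i₂ < w i₁) : w i₁ < w i₂ :=
    (not_lt.1 hw).lt_of_ne (w.injective.ne hne)
  refine sum_filter_and_eq_of_involutive (by positivity) _ (fun w => by simp [mul_assoc])
    (fun w => ?_) hQ fun w hw => mallows_mul_swap hi (hasc w hw)
  simp only [Perm.mul_apply, swap_apply_left, swap_apply_right]
  exact ⟨lt_asymm, hasc w⟩

theorem mallowsProb_invDescent_and (hq : 0 < q) (hj : (j₂ : ℕ) = j₁ + 1)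
    (Q : Perm (Fin n) → Prop) [DecidablePred Q] (hQ : ∀ w, Q (swap j₁ j₂ * w) ↔ Q w) :
    mallowsProb q n (fun w => w⁻¹ j₂ < w⁻¹ j₁ ∧ Q w) = q / (1 + q) * mallowsProb q n Q := by
  have hne : j₁ ≠ j₂ := fun h => by simp [h] at hj
  have hasc (w : Perm (Fin n)) (hw : ¬w⁻¹ j₂ < w⁻¹ j₁) : w⁻¹ j₁ < w⁻¹ j₂ :=
    (not_lt.1 hw).lt_of_ne (w⁻¹.injective.ne hne)
  refine sum_filter_and_eq_of_involutive (by positivity) _ (fun w => by simp [← mul_assoc])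
    (fun w => ?_) hQ fun w hw => mallows_swap_mul hj (hasc w hw)
  simp only [mul_inv_rev, swap_inv, Perm.mul_apply, swap_apply_left, swap_apply_right]
  exact ⟨lt_asymm, hasc w⟩

theorem mallowsProb_descent (hq : 0 < q) (hi : (i₂ : ℕ) = i₁ + 1) :
    mallowsProb q n (fun w => w i₂ < w i₁) = q / (1 + q) := by
  simpa [mallowsProb_true hq] using mallowsProb_descent_and hq hi (fun _ => True) fun _ => Iff.rfl

theorem mallowsProb_invDescent (hq : 0 < q) (hj : (j₂ : ℕ) = j₁ + 1) :
    mallowsProb q n (fun w => w⁻¹ j₂ < w⁻¹ j₁) = q / (1 + q) := by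
  simpa [mallowsProb_true hq] using
    mallowsProb_invDescent_and hq hj (fun _ => True) fun _ => Iff.rfl

theorem descent_iff_invDescent_of_mapsTo (hi : (i₂ : ℕ) = i₁ + 1) (hj : (j₂ : ℕ) = j₁ + 1)
    {w : Perm (Fin n)} (hA : w i₁ = j₁ ∧ w i₂ = j₂ ∨ w i₁ = j₂ ∧ w i₂ = j₁) :
    w i₂ < w i₁ ↔ w⁻¹ j₂ < w⁻¹ j₁ := by
  rcases hA with ⟨h₁, h₂⟩ | ⟨h₁, h₂⟩ <;>
    rw [Perm.inv_eq_iff_eq.2 h₁.symm, Perm.inv_eq_iff_eq.2 h₂.symm, h₁, h₂, Fin.lt_def,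
      Fin.lt_def] <;> omega

theorem invDescent_mul_swap_iff (hi : (i₂ : ℕ) = i₁ + 1) {w : Perm (Fin n)}
    (hA : ¬(w i₁ = j₁ ∧ w i₂ = j₂ ∨ w i₁ = j₂ ∧ w i₂ = j₁)) :
    (w * swap i₁ i₂)⁻¹ j₂ < (w * swap i₁ i₂)⁻¹ j₁ ↔ w⁻¹ j₂ < w⁻¹ j₁ := by
  simp only [mul_inv_rev, swap_inv, Perm.mul_apply]
  refine swap_lt_swap_iff_of_val_eq_succ hi ?_
  simp only [Perm.inv_eq_iff_eq]
  tauto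

theorem mallowsProb_descent_and_invDescent_sub_mul (hq : 0 < q) (hi : (i₂ : ℕ) = i₁ + 1)
    (hj : (j₂ : ℕ) = j₁ + 1) :
    mallowsProb q n (fun w => w i₂ < w i₁ ∧ w⁻¹ j₂ < w⁻¹ j₁)
        - mallowsProb q n (fun w => w i₂ < w i₁) * mallowsProb q n (fun w => w⁻¹ j₂ < w⁻¹ j₁)
      = (q / (1 + q) - q ^ 2 / (1 + q) ^ 2) *
          mallowsProb q n (fun w => w i₁ = j₁ ∧ w i₂ = j₂ ∨ w i₁ = j₂ ∧ w i₂ = j₁) := by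
  set A : Perm (Fin n) → Prop := fun w => w i₁ = j₁ ∧ w i₂ = j₂ ∨ w i₁ = j₂ ∧ w i₂ = j₁
  show _ = _ * mallowsProb q n A
  have hA_mul_swap (w : Perm (Fin n)) : A (w * swap i₁ i₂) ↔ A w := by
    simp only [A, Perm.mul_apply, swap_apply_left, swap_apply_right]
    tauto
  have hA_swap_mul (w : Perm (Fin n)) : A (swap j₁ j₂ * w) ↔ A w := by
    simp only [A, Perm.mul_apply, swap_apply_eq_iff, swap_apply_left, swap_apply_right]
    tauto
  have hon : mallowsProb q n (fun w => (w i₂ < w i₁ ∧ w⁻¹ j₂ < w⁻¹ j₁) ∧ A w)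
      = q / (1 + q) * mallowsProb q n A := by
    rw [← mallowsProb_descent_and hq hi A hA_mul_swap]
    exact mallowsProb_congr fun w => ⟨fun h => ⟨h.1.1, h.2⟩,
      fun h => ⟨⟨h.1, (descent_iff_invDescent_of_mapsTo hi hj h.2).1 h.1⟩, h.2⟩⟩
  have hoff : mallowsProb q n (fun w => (w i₂ < w i₁ ∧ w⁻¹ j₂ < w⁻¹ j₁) ∧ ¬A w)
      = q / (1 + q) * (q / (1 + q) * (1 - mallowsProb q n A)) := by
    rw [mallowsProb_congr fun w => and_assoc, mallowsProb_descent_and hq hi _ fun w => by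
        rw [hA_mul_swap]; exact and_congr_left (invDescent_mul_swap_iff hi),
      mallowsProb_invDescent_and hq hj _ fun w => (hA_swap_mul w).not, mallowsProb_not hq]
  rw [← mallowsProb_and_add_and_not _ A, hon, hoff, mallowsProb_descent hq hi,
    mallowsProb_invDescent hq hj, ← div_pow]
  ring

end AdjacentPair

theorem sum_mul_card_filter {α β : Type*} [Fintype α] (μ : α → ℝ) (s : Finset β)
    (P : β → α → Prop) [∀ b a, Decidable (P b a)] :
    ∑ a, μ a * #(s.filter (P · a)) = ∑ b ∈ s, ∑ a ∈ univ.filter (P b), μ a := by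
  simp only [card_filter, Nat.cast_sum, Nat.cast_ite, Nat.cast_one, Nat.cast_zero, mul_sum,
    mul_ite, mul_one, mul_zero, sum_filter]
  exact sum_comm

def adjPairs (n : ℕ) : Finset (Fin n × Fin n) :=
  univ.filter fun c => (c.2 : ℕ) = c.1 + 1

@[simp]
theorem mem_adjPairs {n : ℕ} {c : Fin n × Fin n} : c ∈ adjPairs n ↔ (c.2 : ℕ) = c.1 + 1 := by
  simp [adjPairs]

theorem desCount_eq_card_filter {n : ℕ} (w : Perm (Fin n)) :
    desCount n w = #((adjPairs n).filter fun c => w c.2 < w c.1) := by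
  rw [desCount, adjPairs, filter_filter]

theorem mallows_cov_desCount_eq_sum_adjPairs (q : ℝ) (n : ℕ) :
    (∑ w : Perm (Fin n), mallows q n w * ((desCount n w : ℝ) * (desCount n w⁻¹ : ℝ)))
        - (∑ w : Perm (Fin n), mallows q n w * (desCount n w : ℝ))
          * (∑ w : Perm (Fin n), mallows q n w * (desCount n w⁻¹ : ℝ))
      = ∑ p ∈ adjPairs n ×ˢ adjPairs n,
          (mallowsProb q n (fun w => w p.1.2 < w p.1.1 ∧ w⁻¹ p.2.2 < w⁻¹ p.2.1)
            - mallowsProb q n (fun w => w p.1.2 < w p.1.1)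
              * mallowsProb q n (fun w => w⁻¹ p.2.2 < w⁻¹ p.2.1)) := by
  simp only [desCount_eq_card_filter, ← Nat.cast_mul, ← card_product, ← filter_product,
    sum_mul_card_filter]
  rw [sum_mul_sum, ← sum_product', ← sum_sub_distrib]
  rfl

theorem stmt_19_general (n : ℕ) (q : ℝ) (hq0 : 0 < q) :
    ((∑ w : Equiv.Perm (Fin n),
        mallows q n w * ((desCount n w : ℝ) * (desCount n w⁻¹ : ℝ)))
      - (∑ w : Equiv.Perm (Fin n), mallows q n w * (desCount n w : ℝ))
        * (∑ w : Equiv.Perm (Fin n), mallows q n w * (desCount n w⁻¹ : ℝ))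
    = (q / (1 + q) - q ^ 2 / (1 + q) ^ 2) *
        ∑ p ∈ (Finset.univ : Finset ((Fin n × Fin n) × (Fin n × Fin n))).filter
            (fun p => (p.1.2 : ℕ) = (p.1.1 : ℕ) + 1 ∧ (p.2.2 : ℕ) = (p.2.1 : ℕ) + 1),
          ∑ w ∈ Finset.univ.filter
              (fun w : Equiv.Perm (Fin n) =>
                (w p.1.1 = p.2.1 ∧ w p.1.2 = p.2.2) ∨
                (w p.1.1 = p.2.2 ∧ w p.1.2 = p.2.1)),
            mallows q n w) ∧
    0 ≤ (∑ w : Equiv.Perm (Fin n),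
        mallows q n w * ((desCount n w : ℝ) * (desCount n w⁻¹ : ℝ)))
      - (∑ w : Equiv.Perm (Fin n), mallows q n w * (desCount n w : ℝ))
        * (∑ w : Equiv.Perm (Fin n), mallows q n w * (desCount n w⁻¹ : ℝ)) := by
  have hpairs : (univ : Finset ((Fin n × Fin n) × (Fin n × Fin n))).filter
      (fun p => (p.1.2 : ℕ) = (p.1.1 : ℕ) + 1 ∧ (p.2.2 : ℕ) = (p.2.1 : ℕ) + 1)
        = adjPairs n ×ˢ adjPairs n := by
    ext
    simp
  have hcov := mallows_cov_desCount_eq_sum_adjPairs q n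
  rw [sum_congr rfl fun p hp => mallowsProb_descent_and_invDescent_sub_mul hq0
    (mem_adjPairs.1 (mem_product.1 hp).1) (mem_adjPairs.1 (mem_product.1 hp).2), ← mul_sum,
    ← hpairs] at hcov
  refine ⟨hcov, hcov ▸ mul_nonneg ?_ (sum_nonneg fun p _ => mallowsProb_nonneg hq0 _)⟩
  rw [← div_pow, sub_nonneg]
  exact pow_le_of_le_one (by positivity) ((div_le_one (by positivity)).2 (by linarith))
    two_ne_zero

/-- For `q ∈ (0,1)` and `n ≥ 2`, with `w` Mallows distributed on `S_n`,
`Cov(des(w), des(w⁻¹)) = (q/(1+q) - q²/(1+q)²) · ∑_{i,j} P({w(i), w(i+1)} = {j, j+1})`,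
where the sum is over positions `i` and values `j` (each with a successor); in particular
the covariance is non-negative. -/
theorem stmt_19 (n : ℕ) (hn : 2 ≤ n) (q : ℝ) (hq0 : 0 < q) (hq1 : q < 1) :
    ((∑ w : Equiv.Perm (Fin n),
        mallows q n w * ((desCount n w : ℝ) * (desCount n w⁻¹ : ℝ)))
      - (∑ w : Equiv.Perm (Fin n), mallows q n w * (desCount n w : ℝ))
        * (∑ w : Equiv.Perm (Fin n), mallows q n w * (desCount n w⁻¹ : ℝ))
    = (q / (1 + q) - q ^ 2 / (1 + q) ^ 2) *
        ∑ p ∈ (Finset.univ : Finset ((Fin n × Fin n) × (Fin n × Fin n))).filter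
            (fun p => (p.1.2 : ℕ) = (p.1.1 : ℕ) + 1 ∧ (p.2.2 : ℕ) = (p.2.1 : ℕ) + 1),
          ∑ w ∈ Finset.univ.filter
              (fun w : Equiv.Perm (Fin n) =>
                (w p.1.1 = p.2.1 ∧ w p.1.2 = p.2.2) ∨
                (w p.1.1 = p.2.2 ∧ w p.1.2 = p.2.1)),
            mallows q n w) ∧
    0 ≤ (∑ w : Equiv.Perm (Fin n),
        mallows q n w * ((desCount n w : ℝ) * (desCount n w⁻¹ : ℝ)))
      - (∑ w : Equiv.Perm (Fin n), mallows q n w * (desCount n w : ℝ))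
        * (∑ w : Equiv.Perm (Fin n), mallows q n w * (desCount n w⁻¹ : ℝ)) :=
  stmt_19_general n q hq0
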